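/- arXiv:2002.01516 — 6 statements merged into one kernel-verified Lean document; each statement's English description precedes it below -/
import Mathlib

section
/- Let F : ℝ^s → ℝ^s be continuous and let I_k, I_{k+1}, I_{k+2} be closed boxes (products of closed intervals [a_{ik}, b_{ik}]) such that F(I_k) ⊆ I_{k+1} ⊆ int(I_k) and F(I_{k+1}) ⊆ I_{k+2} ⊆ int(I_{k+1}). Then there exist closed boxes J̄ and J such that J̄ ⊆ int(I_k), I_{k+1} ⊆ int(J̄), I_{k+2} ⊆ int(J), J ⊆ int(I_{k+1}), and F(J̄) ⊆ J. -/
/-! A compact box inside an open set can be enlarged by a uniform margin and stay inside it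
(compactness gives a thickening inside the open set, and in the sup metric the enlarged box lies
in that thickening). First enlarge `I (k+2)` to a box `J` inside `int I (k+1)`; then enlarge
`I (k+1)` to a box `J̄` inside the open set `int I k ∩ F⁻¹(int J)`, which contains `I (k+1)`
because `F (I (k+1)) ⊆ I (k+2) ⊆ int J`. -/

open Set Metric

lemma abs_sub_projIcc_le {a b δ x : ℝ} (hab : a ≤ b) (hδ : 0 ≤ δ)
    (hx : x ∈ Icc (a - δ) (b + δ)) : |x - projIcc a b hab x| ≤ δ := by
  rw [coe_projIcc, abs_le]
  obtain ⟨hxa, hxb⟩ := hx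
  constructor <;>
  · rcases le_total x a with h | h <;> rcases le_total x b with h' | h' <;>
      simp only [min_eq_left, min_eq_right, max_eq_left, max_eq_right, *] <;> linarith

section Boxes

variable {ι : Type*} [Fintype ι]

lemma pi_Icc_subset_interior_pi_Icc {a b c d : ι → ℝ} (hca : ∀ i, c i < a i)
    (hbd : ∀ i, b i < d i) :
    univ.pi (fun i => Icc (a i) (b i)) ⊆ interior (univ.pi fun i => Icc (c i) (d i)) := by
  rw [interior_pi_set finite_univ]
  exact pi_mono fun i _ => by simpa only [interior_Icc] using Icc_subset_Ioo (hca i) (hbd i)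

lemma pi_Icc_sub_add_subset_thickening {a b : ι → ℝ} (hab : ∀ i, a i ≤ b i) {δ ε : ℝ}
    (hδ : 0 ≤ δ) (hδε : δ < ε) :
    univ.pi (fun i => Icc (a i - δ) (b i + δ)) ⊆
      thickening ε (univ.pi fun i => Icc (a i) (b i)) := by
  intro x hx
  refine mem_thickening_iff.2 ⟨fun i => projIcc (a i) (b i) (hab i) (x i),
    fun i _ => Subtype.mem _, (dist_pi_lt_iff (hδ.trans_lt hδε)).2 fun i => ?_⟩
  rw [Real.dist_eq]
  exact (abs_sub_projIcc_le (hab i) hδ (hx i (mem_univ i))).trans_lt hδε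

lemma exists_pi_Icc_subset_of_isOpen {a b : ι → ℝ} (hab : ∀ i, a i ≤ b i)
    {U : Set (ι → ℝ)} (hU : IsOpen U) (hsub : univ.pi (fun i => Icc (a i) (b i)) ⊆ U) :
    ∃ c d : ι → ℝ, (∀ i, c i < d i) ∧
      univ.pi (fun i => Icc (a i) (b i)) ⊆ interior (univ.pi fun i => Icc (c i) (d i)) ∧
      univ.pi (fun i => Icc (c i) (d i)) ⊆ U := by
  obtain ⟨ε, hε, hthick⟩ :=
    (isCompact_univ_pi fun i => isCompact_Icc).exists_thickening_subset_open hU hsub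
  have hδ : 0 < ε / 2 := half_pos hε
  refine ⟨fun i => a i - ε / 2, fun i => b i + ε / 2, fun i => by linarith [hab i],
    pi_Icc_subset_interior_pi_Icc (fun _ => by linarith) (fun _ => by linarith), ?_⟩
  exact (pi_Icc_sub_add_subset_thickening hab hδ.le (half_lt_self hε)).trans hthick

end Boxes

theorem stmt0_general {s : ℕ} (F : (Fin s → ℝ) → (Fin s → ℝ)) (hF : Continuous F)
    (a b : ℕ → Fin s → ℝ) (k : ℕ)
    (hab : ∀ n ∈ ({k, k+1, k+2} : Set ℕ), ∀ i, a n i < b n i)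
    (I : ℕ → Set (Fin s → ℝ))
    (hI : ∀ n ∈ ({k, k+1, k+2} : Set ℕ), I n = univ.pi fun i => Icc (a n i) (b n i))
    (h2 : I (k+1) ⊆ interior (I k))
    (h3 : F '' I (k+1) ⊆ I (k+2)) (h4 : I (k+2) ⊆ interior (I (k+1))) :
    ∃ (cbar dbar c d : Fin s → ℝ),
      (∀ i, cbar i < dbar i) ∧ (∀ i, c i < d i) ∧
      (univ.pi fun i => Icc (cbar i) (dbar i)) ⊆ interior (I k) ∧
      I (k+1) ⊆ interior (univ.pi fun i => Icc (cbar i) (dbar i)) ∧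
      I (k+2) ⊆ interior (univ.pi fun i => Icc (c i) (d i)) ∧
      (univ.pi fun i => Icc (c i) (d i)) ⊆ interior (I (k+1)) ∧
      F '' (univ.pi fun i => Icc (cbar i) (dbar i)) ⊆
        (univ.pi fun i => Icc (c i) (d i)) := by
  have hab₁ i := (hab (k+1) (by simp) i).le
  have hab₂ i := (hab (k+2) (by simp) i).le
  rw [hI (k+2) (by simp)] at h3 h4 ⊢
  obtain ⟨c, d, hcd, hJ_int, hJ_sub⟩ := exists_pi_Icc_subset_of_isOpen hab₂ isOpen_interior h4
  rw [hI (k+1) (by simp)] at h2 h3 hJ_sub ⊢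
  obtain ⟨cbar, dbar, hcdbar, hJbar_int, hJbar_sub⟩ :=
    exists_pi_Icc_subset_of_isOpen hab₁ (isOpen_interior.inter (isOpen_interior.preimage hF))
      fun x hx => ⟨h2 hx, hJ_int (h3 (mem_image_of_mem F hx))⟩
  refine ⟨cbar, dbar, c, d, hcdbar, hcd, hJbar_sub.trans inter_subset_left, hJbar_int, hJ_int,
    hJ_sub, ?_⟩
  rintro _ ⟨x, hx, rfl⟩
  exact interior_subset (hJbar_sub hx).2

/-- Given a continuous `F : ℝ^s → ℝ^s` and closed boxes
`I_k, I_{k+1}, I_{k+2}` with `F(I_k) ⊆ I_{k+1} ⊆ int I_k` and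
`F(I_{k+1}) ⊆ I_{k+2} ⊆ int I_{k+1}`, there exist closed boxes `J̄`, `J` with
`J̄ ⊆ int I_k`, `I_{k+1} ⊆ int J̄`, `I_{k+2} ⊆ int J`, `J ⊆ int I_{k+1}` and
`F(J̄) ⊆ J`. -/
theorem stmt0 {s : ℕ} (F : (Fin s → ℝ) → (Fin s → ℝ)) (hF : Continuous F)
    (a b : ℕ → Fin s → ℝ) (k : ℕ)
    (hab : ∀ n ∈ ({k, k+1, k+2} : Set ℕ), ∀ i, a n i < b n i)
    (I : ℕ → Set (Fin s → ℝ))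
    (hI : ∀ n ∈ ({k, k+1, k+2} : Set ℕ), I n = univ.pi fun i => Icc (a n i) (b n i))
    (h1 : F '' I k ⊆ I (k+1)) (h2 : I (k+1) ⊆ interior (I k))
    (h3 : F '' I (k+1) ⊆ I (k+2)) (h4 : I (k+2) ⊆ interior (I (k+1))) :
    ∃ (cbar dbar c d : Fin s → ℝ),
      (∀ i, cbar i < dbar i) ∧ (∀ i, c i < d i) ∧
      (univ.pi fun i => Icc (cbar i) (dbar i)) ⊆ interior (I k) ∧
      I (k+1) ⊆ interior (univ.pi fun i => Icc (cbar i) (dbar i)) ∧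
      I (k+2) ⊆ interior (univ.pi fun i => Icc (c i) (d i)) ∧
      (univ.pi fun i => Icc (c i) (d i)) ⊆ interior (I (k+1)) ∧
      F '' (univ.pi fun i => Icc (cbar i) (dbar i)) ⊆
        (univ.pi fun i => Icc (c i) (d i)) :=
  stmt0_general F hF a b k hab I hI h2 h3 h4
end

section
/- Let L = (L_{ij}) be an s × s matrix with nonnegative entries and suppose there exist positive numbers ξ_1, …, ξ_s with ξ_i(1 − L_{ii}) > ∑_{j ≠ i} ξ_j L_{ij} for all i. Define α_i = L_{ii} + ∑_{j ≠ i} (ξ_j/ξ_i) L_{ij} and α = max_i α_i. Then 0 ≤ α < 1, and for any point x* ∈ ℝ^s and any map F : ℝ^s → ℝ^s fixing x* and satisfying |f_i(x) − f_i(x with j-th coordinate replaced by x*_j)| ≤ L_{ij}|x_j − x*_j| componentwise, one has: for every c > 0, if |x_j − x*_j| ≤ c ξ_j for all j, then |f_i(x) − x*_i| ≤ α c ξ_i for all i. -/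
/-!
Moving from `x` to `x*` one coordinate at a time and applying the Lipschitz-type condition at each
step bounds `|f_i(x) − x*_i|` by `∑_j L_{ij} |x_j − x*_j| ≤ c ∑_j L_{ij} ξ_j = c ξ_i α_i ≤ α c ξ_i`.
Weighted diagonal dominance is exactly `α_i < 1`.
-/

open Finset

section

variable {ι : Type*} [Fintype ι] [DecidableEq ι]

theorem norm_sub_le_sum_of_update {α E : Type*} [SeminormedAddCommGroup E]
    (f : (ι → α) → E) (y : ι → α) (d : ι → α → ℝ)
    (hf : ∀ z j, ‖f z - f (Function.update z j (y j))‖ ≤ d j (z j)) (x : ι → α) :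
    ‖f x - f y‖ ≤ ∑ j, d j (x j) := by
  suffices h : ∀ T : Finset ι, ‖f x - f (T.piecewise y x)‖ ≤ ∑ j ∈ T, d j (x j) by
    simpa using h univ
  intro T
  induction T using Finset.induction_on with
  | empty => simp
  | @insert a T ha ih =>
    have hstep := hf (T.piecewise y x) a
    rw [Finset.piecewise_eq_of_notMem _ _ _ ha] at hstep
    rw [Finset.piecewise_insert, Finset.sum_insert ha]
    calc ‖f x - f (Function.update (T.piecewise y x) a (y a))‖
        ≤ ‖f x - f (T.piecewise y x)‖
          + ‖f (T.piecewise y x) - f (Function.update (T.piecewise y x) a (y a))‖ :=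
          norm_sub_le_norm_sub_add_norm_sub _ _ _
      _ ≤ d a (x a) + ∑ j ∈ T, d j (x j) := by linarith

/-- The paper's `α_i`. -/
noncomputable def weightedRowSum (L : Matrix ι ι ℝ) (ξ : ι → ℝ) (i : ι) : ℝ :=
  L i i + ∑ j ∈ univ.erase i, ξ j / ξ i * L i j

variable {L : Matrix ι ι ℝ} {ξ : ι → ℝ} {i : ι}

theorem mul_weightedRowSum (hξi : ξ i ≠ 0) :
    ξ i * weightedRowSum L ξ i = ξ i * L i i + ∑ j ∈ univ.erase i, ξ j * L i j := by
  rw [weightedRowSum, mul_add, mul_sum]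
  congr 1
  refine sum_congr rfl fun j _ => ?_
  field_simp

theorem mul_weightedRowSum_eq_sum (hξi : ξ i ≠ 0) :
    ξ i * weightedRowSum L ξ i = ∑ j, ξ j * L i j := by
  rw [mul_weightedRowSum hξi, add_sum_erase _ (fun j => ξ j * L i j) (mem_univ i)]

theorem weightedRowSum_nonneg (hL : ∀ j, 0 ≤ L i j) (hξ : ∀ j, 0 ≤ ξ j) :
    0 ≤ weightedRowSum L ξ i :=
  add_nonneg (hL i) (sum_nonneg fun j _ => mul_nonneg (div_nonneg (hξ j) (hξ i)) (hL j))

theorem weightedRowSum_lt_one (hξi : 0 < ξ i)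
    (hdom : ∑ j ∈ univ.erase i, ξ j * L i j < ξ i * (1 - L i i)) :
    weightedRowSum L ξ i < 1 := by
  have h := mul_weightedRowSum (L := L) hξi.ne'
  nlinarith

end

/-- under weighted strict diagonal dominance of `I - L`, the
quantity `α = max_i (L_{ii} + ∑_{j≠i} (ξ_j/ξ_i) L_{ij})` satisfies `0 ≤ α < 1`,
and the componentwise Lipschitz condition yields the contraction estimate
`|f_i(x) − x*_i| ≤ α c ξ_i` on the box `|x_j − x*_j| ≤ c ξ_j`. -/
theorem stmt3 {s : ℕ} (hs : 0 < s) (L : Matrix (Fin s) (Fin s) ℝ)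
    (hL : ∀ i j, 0 ≤ L i j)
    (ξ : Fin s → ℝ) (hξ : ∀ i, 0 < ξ i)
    (hdom : ∀ i, ∑ j ∈ univ.erase i, ξ j * L i j < ξ i * (1 - L i i))
    (α : ℝ)
    (hα : α = univ.sup' (univ_nonempty_iff.mpr (Fin.pos_iff_nonempty.mp hs))
      (fun i => L i i + ∑ j ∈ univ.erase i, (ξ j / ξ i) * L i j)) :
    0 ≤ α ∧ α < 1 ∧
    ∀ (xstar : Fin s → ℝ) (F : (Fin s → ℝ) → (Fin s → ℝ)),
      F xstar = xstar →
      (∀ (x : Fin s → ℝ) (i j : Fin s),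
        |F x i - F (Function.update x j (xstar j)) i| ≤ L i j * |x j - xstar j|) →
      ∀ c : ℝ, 0 < c → ∀ x : Fin s → ℝ,
        (∀ j, |x j - xstar j| ≤ c * ξ j) →
        ∀ i, |F x i - xstar i| ≤ α * c * ξ i := by
  change α = univ.sup' _ (weightedRowSum L ξ) at hα
  have hle : ∀ i, weightedRowSum L ξ i ≤ α := fun i => hα ▸ le_sup' _ (mem_univ i)
  refine ⟨(weightedRowSum_nonneg (hL ⟨0, hs⟩) fun j => (hξ j).le).trans (hle _),
    hα ▸ (sup'_lt_iff _).2 fun i _ => weightedRowSum_lt_one (hξ i) (hdom i), ?_⟩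
  intro xstar F hfix hLip c hc x hbox i
  calc |F x i - xstar i|
      ≤ ∑ j, L i j * |x j - xstar j| := by
        simpa [hfix] using norm_sub_le_sum_of_update (fun z => F z i) xstar
          (fun j t => L i j * |t - xstar j|) (fun z j => hLip z i j) x
    _ ≤ ∑ j, c * (ξ j * L i j) :=
        sum_le_sum fun j _ => by nlinarith [hbox j, hL i j]
    _ = c * (ξ i * weightedRowSum L ξ i) := by
        rw [← mul_sum, mul_weightedRowSum_eq_sum (hξ i).ne']
    _ ≤ α * c * ξ i := by
        nlinarith [mul_le_mul_of_nonneg_left (hle i) (mul_pos hc (hξ i)).le]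
end

section
/- Let L be an s × s nonnegative matrix such that I − L is an M-matrix (there exist ξ_i > 0 with ξ_i(1 − L_{ii}) > ∑_{j≠i} ξ_j L_{ij}). Let F : ℝ^s → ℝ^s be continuous with fixed point z_* = (x*_1, …, x*_s), satisfying the componentwise Lipschitz condition |f_i(x) − f_i(x with x_j replaced by x*_j)| ≤ L_{ij}|x_j − x*_j| on an open box D containing z_*. Then z_* is a strong attractor of F in some open box: there exist closed boxes I_n = ∏_i [x*_i − α^{n−1} c ξ_i, x*_i + α^{n−1} c ξ_i] (for suitable c > 0 and α ∈ (0,1)) with I_1 ⊆ D, F(I_n) ⊆ I_{n+1} for all n ≥ 1, and ⋂_n I_n = {z_*}. -/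
/-!
Replacing the coordinates x_j by x*_j one at a time telescopes the componentwise Lipschitz
condition into |f_i(x) − x*_i| ≤ ∑_j L_ij |x_j − x*_j|. On the box with radii r ξ_i this is at most
r ∑_j ξ_j L_ij ≤ α r ξ_i, where α < 1 bounds the finitely many ratios ∑_j ξ_j L_ij / ξ_i < 1
given by weighted diagonal dominance. Hence F maps the box of radius r into the box of radius α r,
and the radii α^(n−1) c shrink to 0.
-/

open Set Filter Topology

theorem exists_mem_Ioo_forall_le_of_forall_lt_one {ι : Type*} [Finite ι] {r : ι → ℝ}
    (hr : ∀ i, r i < 1) : ∃ α ∈ Ioo (0 : ℝ) 1, ∀ i, r i ≤ α :=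
  (Eventually.and (Ioo_mem_nhdsLT one_pos) <| eventually_all.2 fun i =>
    ((eventually_gt_nhds (hr i)).filter_mono nhdsWithin_le_nhds).mono fun _ h => h.le).exists

section WeightedDominance

variable {ι : Type*} [Fintype ι] [DecidableEq ι] {L : Matrix ι ι ℝ} {ξ : ι → ℝ}

theorem weighted_row_sum_lt
    (hdom : ∀ i, ∑ j ∈ Finset.univ.erase i, ξ j * L i j < ξ i * (1 - L i i)) (i : ι) :
    ∑ j, ξ j * L i j < ξ i := by
  rw [← Finset.add_sum_erase _ _ (Finset.mem_univ i)]
  linarith [hdom i]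

theorem exists_weighted_row_sum_le_mul (hξ : ∀ i, 0 < ξ i)
    (hdom : ∀ i, ∑ j ∈ Finset.univ.erase i, ξ j * L i j < ξ i * (1 - L i i)) :
    ∃ α ∈ Ioo (0 : ℝ) 1, ∀ i, ∑ j, ξ j * L i j ≤ α * ξ i := by
  obtain ⟨α, hα, hle⟩ := exists_mem_Ioo_forall_le_of_forall_lt_one fun i =>
    (div_lt_one (hξ i)).2 (weighted_row_sum_lt hdom i)
  exact ⟨α, hα, fun i => (div_le_iff₀ (hξ i)).1 (hle i)⟩

end WeightedDominance

theorem abs_apply_sub_le_sum_of_update_le {ι : Type*} [Fintype ι] [DecidableEq ι]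
    {S : ι → Set ℝ} {F : (ι → ℝ) → ι → ℝ} {L : Matrix ι ι ℝ} {z : ι → ℝ}
    (hz : z ∈ univ.pi S)
    (hlip : ∀ x ∈ univ.pi S, ∀ i j,
      |F x i - F (Function.update x j (z j)) i| ≤ L i j * |x j - z j|)
    {x : ι → ℝ} (hx : x ∈ univ.pi S) (i : ι) :
    |F x i - F z i| ≤ ∑ j, L i j * |x j - z j| := by
  suffices h : ∀ t : Finset ι,
      |F x i - F (t.piecewise z x) i| ≤ ∑ j ∈ t, L i j * |x j - z j| by
    simpa using h Finset.univ
  intro t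
  induction t using Finset.induction_on with
  | empty => simp
  | insert j t hj ih =>
    have hmem : t.piecewise z x ∈ univ.pi S := Finset.piecewise_mem_set_pi _ hz hx
    have hstep := hlip _ hmem i j
    rw [Finset.piecewise_eq_of_notMem _ _ _ hj] at hstep
    rw [Finset.piecewise_insert, Finset.sum_insert hj]
    calc |F x i - F (Function.update (t.piecewise z x) j (z j)) i|
        ≤ |F x i - F (t.piecewise z x) i|
          + |F (t.piecewise z x) i - F (Function.update (t.piecewise z x) j (z j)) i| :=
          abs_sub_le _ _ _
      _ ≤ _ := by linarith

section WeightedBox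

variable {ι : Type*}

def weightedBox (z ξ : ι → ℝ) (r : ℝ) : Set (ι → ℝ) :=
  univ.pi fun i => Icc (z i - r * ξ i) (z i + r * ξ i)

variable {z ξ : ι → ℝ} {r : ℝ}

theorem mem_weightedBox {x : ι → ℝ} : x ∈ weightedBox z ξ r ↔ ∀ i, |x i - z i| ≤ r * ξ i := by
  simp only [weightedBox, mem_univ_pi, mem_Icc, abs_sub_le_iff, sub_le_comm, sub_le_iff_le_add',
    and_comm]

theorem center_mem_weightedBox (hr : 0 ≤ r) (hξ : ∀ i, 0 ≤ ξ i) : z ∈ weightedBox z ξ r :=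
  mem_weightedBox.2 fun i => by simpa using mul_nonneg hr (hξ i)

theorem weightedBox_mono (hξ : ∀ i, 0 ≤ ξ i) {r' : ℝ} (hr : r ≤ r') :
    weightedBox z ξ r ⊆ weightedBox z ξ r' := fun _ hx =>
  mem_weightedBox.2 fun i => (mem_weightedBox.1 hx i).trans (mul_le_mul_of_nonneg_right hr (hξ i))

theorem weightedBox_subset_closedBall [Fintype ι] (hr : 0 ≤ r) :
    weightedBox z ξ r ⊆ Metric.closedBall z (r * ‖ξ‖) := fun x hx =>
  (dist_pi_le_iff (by positivity)).2 fun i =>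
    (mem_weightedBox.1 hx i).trans <|
      mul_le_mul_of_nonneg_left ((le_abs_self _).trans (norm_le_pi_norm ξ i)) hr

theorem exists_weightedBox_subset [Fintype ι] {U : Set (ι → ℝ)} (hU : U ∈ 𝓝 z) :
    ∃ c > 0, weightedBox z ξ c ⊆ U := by
  obtain ⟨ε, hε, hball⟩ := Metric.mem_nhds_iff.1 hU
  have hc : 0 < ε / (‖ξ‖ + 1) := by positivity
  refine ⟨ε / (‖ξ‖ + 1), hc, (weightedBox_subset_closedBall hc.le).trans <|
    (Metric.closedBall_subset_ball ?_).trans hball⟩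
  rw [div_mul_eq_mul_div, div_lt_iff₀ (by positivity)]
  nlinarith [norm_nonneg ξ]

theorem image_weightedBox_subset [Fintype ι] {F : (ι → ℝ) → ι → ℝ} {L : Matrix ι ι ℝ} {α : ℝ}
    (hL : ∀ i j, 0 ≤ L i j) (hr : 0 ≤ r) (hα : ∀ i, ∑ j, ξ j * L i j ≤ α * ξ i)
    (hF : ∀ x ∈ weightedBox z ξ r, ∀ i, |F x i - F z i| ≤ ∑ j, L i j * |x j - z j|)
    (hfix : F z = z) :
    F '' weightedBox z ξ r ⊆ weightedBox z ξ (α * r) := by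
  rintro _ ⟨x, hx, rfl⟩
  refine mem_weightedBox.2 fun i => ?_
  calc |F x i - z i| = |F x i - F z i| := by rw [hfix]
    _ ≤ ∑ j, L i j * |x j - z j| := hF x hx i
    _ ≤ ∑ j, L i j * (r * ξ j) := Finset.sum_le_sum fun j _ =>
        mul_le_mul_of_nonneg_left (mem_weightedBox.1 hx j) (hL i j)
    _ = r * ∑ j, ξ j * L i j := by rw [Finset.mul_sum]; congr 1; ext j; ring
    _ ≤ r * (α * ξ i) := mul_le_mul_of_nonneg_left (hα i) hr
    _ = α * r * ξ i := by ring

theorem eq_of_eventually_mem_weightedBox {κ : Type*} {l : Filter κ} [l.NeBot] {ρ : κ → ℝ}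
    (hρ : Tendsto ρ l (𝓝 0)) {x : ι → ℝ} (hx : ∀ᶠ k in l, x ∈ weightedBox z ξ (ρ k)) :
    x = z := by
  funext i
  have hlim : Tendsto (fun k => ρ k * ξ i) l (𝓝 0) := by simpa using hρ.mul_const (ξ i)
  have habs : |x i - z i| ≤ 0 := ge_of_tendsto hlim (hx.mono fun _ hk => mem_weightedBox.1 hk i)
  exact sub_eq_zero.1 (abs_nonpos_iff.1 habs)

end WeightedBox

theorem stmt4_general {s : ℕ} (L : Matrix (Fin s) (Fin s) ℝ) (hL : ∀ i j, 0 ≤ L i j)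
    (ξ : Fin s → ℝ) (hξ : ∀ i, 0 < ξ i)
    (hdom : ∀ i, ∑ j ∈ Finset.univ.erase i, ξ j * L i j < ξ i * (1 - L i i))
    (F : (Fin s → ℝ) → (Fin s → ℝ))
    (zstar : Fin s → ℝ)
    (aD bD : Fin s → ℝ) (D : Set (Fin s → ℝ))
    (hD : D = univ.pi fun i => Ioo (aD i) (bD i)) (hzD : zstar ∈ D)
    (hfix : F zstar = zstar)
    (hlip : ∀ x ∈ D, ∀ i j,
      |F x i - F (Function.update x j (zstar j)) i| ≤ L i j * |x j - zstar j|) :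
    ∃ c : ℝ, 0 < c ∧ ∃ α : ℝ, α ∈ Ioo (0:ℝ) 1 ∧
      ∀ I : ℕ → Set (Fin s → ℝ),
        (∀ n, I n = univ.pi fun i =>
          Icc (zstar i - α ^ (n - 1) * c * ξ i) (zstar i + α ^ (n - 1) * c * ξ i)) →
        I 1 ⊆ D ∧ (∀ n, 1 ≤ n → F '' I n ⊆ I (n + 1)) ∧
        ⋂ n ∈ {m : ℕ | 1 ≤ m}, I n = {zstar} := by
  subst hD
  obtain ⟨α, ⟨hα0, hα1⟩, hαξ⟩ := exists_weighted_row_sum_le_mul hξ hdom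
  obtain ⟨c, hc, hcD⟩ := exists_weightedBox_subset (ξ := ξ) <|
    (isOpen_set_pi finite_univ fun _ _ => isOpen_Ioo).mem_nhds hzD
  refine ⟨c, hc, α, ⟨hα0, hα1⟩, fun I hI => ?_⟩
  have hI' : ∀ n, I n = weightedBox zstar ξ (α ^ (n - 1) * c) := hI
  have hboxD : ∀ n : ℕ, weightedBox zstar ξ (α ^ n * c) ⊆ univ.pi fun i => Ioo (aD i) (bD i) :=
    fun n => (weightedBox_mono (fun i => (hξ i).le) <|
      mul_le_of_le_one_left hc.le (pow_le_one₀ hα0.le hα1.le)).trans hcD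
  refine ⟨(hI' 1).trans_subset (hboxD _), fun n hn => ?_, ?_⟩
  · obtain ⟨m, rfl⟩ := Nat.exists_eq_add_of_le' hn
    rw [hI', hI', Nat.add_sub_cancel, Nat.add_sub_cancel, pow_succ', mul_assoc]
    exact image_weightedBox_subset hL (by positivity) hαξ
      (fun x hx => abs_apply_sub_le_sum_of_update_le hzD hlip (hboxD m hx)) hfix
  · refine Subset.antisymm (fun x hx => ?_) ?_
    · have hρ : Tendsto (fun n => α ^ (n - 1) * c) atTop (𝓝 0) := by
        simpa using ((tendsto_pow_atTop_nhds_zero_of_lt_one hα0.le hα1).comp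
          (tendsto_sub_atTop_nat 1)).mul_const c
      refine eq_of_eventually_mem_weightedBox (ξ := ξ) hρ <|
        (eventually_ge_atTop 1).mono fun n hn => ?_
      rw [← hI']
      exact mem_iInter₂.1 hx n hn
    · rintro _ rfl
      exact mem_iInter₂.2 fun n _ =>
        (hI' n).symm ▸ center_mem_weightedBox (by positivity) fun i => (hξ i).le

/-- if `I - L` is an M-matrix (weighted strict diagonal dominance)
and `F` is componentwise Lipschitz with constants `L_{ij}` around its fixed
point `z_*` on an open box `D` containing `z_*`, then `z_*` is a strong
attractor of `F`: there are nested boxes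
`I_n = ∏_i [x*_i − α^{n−1} c ξ_i, x*_i + α^{n−1} c ξ_i]` with `I_1 ⊆ D`,
`F(I_n) ⊆ I_{n+1}` for `n ≥ 1`, and `⋂_{n ≥ 1} I_n = {z_*}`. -/
theorem stmt4 {s : ℕ} (L : Matrix (Fin s) (Fin s) ℝ) (hL : ∀ i j, 0 ≤ L i j)
    (ξ : Fin s → ℝ) (hξ : ∀ i, 0 < ξ i)
    (hdom : ∀ i, ∑ j ∈ Finset.univ.erase i, ξ j * L i j < ξ i * (1 - L i i))
    (F : (Fin s → ℝ) → (Fin s → ℝ)) (hF : Continuous F)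
    (zstar : Fin s → ℝ)
    (aD bD : Fin s → ℝ) (D : Set (Fin s → ℝ))
    (hD : D = univ.pi fun i => Ioo (aD i) (bD i)) (hzD : zstar ∈ D)
    (hfix : F zstar = zstar)
    (hlip : ∀ x ∈ D, ∀ i j,
      |F x i - F (Function.update x j (zstar j)) i| ≤ L i j * |x j - zstar j|) :
    ∃ c : ℝ, 0 < c ∧ ∃ α : ℝ, α ∈ Ioo (0:ℝ) 1 ∧
      ∀ I : ℕ → Set (Fin s → ℝ),
        (∀ n, I n = univ.pi fun i =>
          Icc (zstar i - α ^ (n - 1) * c * ξ i) (zstar i + α ^ (n - 1) * c * ξ i)) →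
        I 1 ⊆ D ∧ (∀ n, 1 ≤ n → F '' I n ⊆ I (n + 1)) ∧
        ⋂ n ∈ {m : ℕ | 1 ≤ m}, I n = {zstar} :=
  stmt4_general L hL ξ hξ hdom F zstar aD bD D hD hzD hfix hlip
end

section
/- Let f_1, f_2 : [0,∞) → [0,∞) be continuous, strictly increasing, f_1(0) = f_2(0) = 0, with f_2(x) > f_1^{-1}(x) on (0, x*) and f_2(x) < f_1^{-1}(x) on (x*, ∞), where y* = f_1(x*) = f_2(x*). Define sequences by a_{1,1} ∈ (0, x*) arbitrary, a_{2,n} = f_2(a_{1,n}), a_{1,n+1} = f_1(a_{2,n}). Then (a_{1,n}) is strictly increasing with a_{1,n} ∈ (0, x*), (a_{2,n}) is strictly increasing with a_{2,n} ∈ (0, y*), and a_{1,n} → x*, a_{2,n} → y* as n → ∞. -/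
open Set Filter Topology

/-!
Write `F = f₁ ∘ f₂`. For `0 < x < x*`, `f₂ x > f₁⁻¹ x` gives `F x > x`, and monotonicity gives
`F x < F x* = x*`. So `a_{1,n}` is an increasing orbit of `F` trapped in `(0, x*)`; its limit is a
fixed point of `F` by continuity, and `F` has no fixed point in `(0, x*)`, so the limit is `x*`.
Applying the continuous increasing `f₂` gives the claims about `a_{2,n}`.
-/

section IncreasingIteration

variable {F : ℝ → ℝ} {a b : ℝ} {u : ℕ → ℝ}

lemma mem_Ioo_of_succ_eq (hF : ∀ x ∈ Ioo a b, F x ∈ Ioo x b)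
    (hu : ∀ n, u (n + 1) = F (u n)) (h0 : u 0 ∈ Ioo a b) (n : ℕ) : u n ∈ Ioo a b := by
  induction n with
  | zero => exact h0
  | succ n ih =>
    rw [hu n]
    exact ⟨ih.1.trans (hF _ ih).1, (hF _ ih).2⟩

lemma strictMono_of_succ_eq (hF : ∀ x ∈ Ioo a b, F x ∈ Ioo x b)
    (hu : ∀ n, u (n + 1) = F (u n)) (h0 : u 0 ∈ Ioo a b) : StrictMono u :=
  strictMono_nat_of_lt_succ fun n => hu n ▸ (hF _ (mem_Ioo_of_succ_eq hF hu h0 n)).1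

lemma tendsto_of_succ_eq (hF : ∀ x ∈ Ioo a b, F x ∈ Ioo x b) (hFc : ContinuousOn F (Ioo a b))
    (hu : ∀ n, u (n + 1) = F (u n)) (h0 : u 0 ∈ Ioo a b) : Tendsto u atTop (𝓝 b) := by
  have hmem := mem_Ioo_of_succ_eq hF hu h0
  have hbdd : BddAbove (range u) := ⟨b, by rintro _ ⟨n, rfl⟩; exact (hmem n).2.le⟩
  have hlim : Tendsto u atTop (𝓝 (⨆ n, u n)) :=
    tendsto_atTop_ciSup (strictMono_of_succ_eq hF hu h0).monotone hbdd
  set L := ⨆ n, u n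
  have hLb : L ≤ b := ciSup_le fun n => (hmem n).2.le
  have haL : a < L := (hmem 0).1.trans_le (le_ciSup hbdd 0)
  suffices L = b from this ▸ hlim
  by_contra hne
  have hL : L ∈ Ioo a b := ⟨haL, hLb.lt_of_ne hne⟩
  have hFL : F L = L := by
    have hFu : Tendsto (fun n => F (u n)) atTop (𝓝 (F L)) :=
      ((hFc.continuousAt (isOpen_Ioo.mem_nhds hL)).tendsto).comp hlim
    refine tendsto_nhds_unique hFu ?_
    simpa only [← hu] using (tendsto_add_atTop_iff_nat 1).mpr hlim
  exact (hF L hL).1.ne' hFL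

end IncreasingIteration

lemma comp_mem_Ioo_of_gt_inv {f1 f2 g1 : ℝ → ℝ} {xstar : ℝ}
    (hm1 : StrictMonoOn f1 (Ici 0)) (hm2 : StrictMonoOn f2 (Ici 0))
    (hmap2 : MapsTo f2 (Ici 0) (Ici 0))
    (hg1 : ∀ x ∈ Ici (0:ℝ), 0 ≤ g1 x ∧ f1 (g1 x) = x)
    (hfix : f1 (f2 xstar) = xstar) (hlt : ∀ x ∈ Ioo 0 xstar, f2 x > g1 x)
    {x : ℝ} (hx : x ∈ Ioo 0 xstar) : f1 (f2 x) ∈ Ioo x xstar := by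
  have hx0 : x ∈ Ici (0:ℝ) := hx.1.le
  have hxs : xstar ∈ Ici (0:ℝ) := (hx.1.trans hx.2).le
  obtain ⟨hg0, hgx⟩ := hg1 x hx0
  constructor
  · calc x = f1 (g1 x) := hgx.symm
      _ < f1 (f2 x) := hm1 hg0 (hmap2 hx0) (hlt x hx)
  · calc f1 (f2 x) < f1 (f2 xstar) := hm1 (hmap2 hx0) (hmap2 hxs) (hm2 hx0 hxs hx.2)
      _ = xstar := hfix

lemma forall_one_le_of_forall_succ {P : ℕ → Prop} (h : ∀ n, P (n + 1)) (n : ℕ) (hn : 1 ≤ n) :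
    P n := by
  obtain ⟨m, rfl⟩ := Nat.exists_eq_add_of_le' hn
  exact h m

theorem stmt7_general (f1 f2 g1 : ℝ → ℝ)
    (hc1 : ContinuousOn f1 (Ici 0)) (hc2 : ContinuousOn f2 (Ici 0))
    (hm1 : StrictMonoOn f1 (Ici 0)) (hm2 : StrictMonoOn f2 (Ici 0))
    (h20 : f2 0 = 0)
    (hmap2 : MapsTo f2 (Ici 0) (Ici 0))
    (hg1 : ∀ x ∈ Ici (0:ℝ), g1 (f1 x) = x ∧ 0 ≤ g1 x ∧ f1 (g1 x) = x)
    (xstar ystar : ℝ) (hx : 0 < xstar)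
    (hy : ystar = f2 xstar) (hfp : f1 ystar = xstar)
    (hlt : ∀ x ∈ Ioo 0 xstar, f2 x > g1 x)
    (a1 a2 : ℕ → ℝ) (ha11 : a1 1 ∈ Ioo 0 xstar)
    (ha2 : ∀ n, 1 ≤ n → a2 n = f2 (a1 n))
    (ha1 : ∀ n, 1 ≤ n → a1 (n + 1) = f1 (a2 n)) :
    (∀ n, 1 ≤ n → a1 n < a1 (n + 1)) ∧ (∀ n, 1 ≤ n → a1 n ∈ Ioo 0 xstar) ∧
    (∀ n, 1 ≤ n → a2 n < a2 (n + 1)) ∧ (∀ n, 1 ≤ n → a2 n ∈ Ioo 0 ystar) ∧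
    Tendsto a1 atTop (nhds xstar) ∧ Tendsto a2 atTop (nhds ystar) := by
  have hF : ∀ x ∈ Ioo 0 xstar, f1 (f2 x) ∈ Ioo x xstar := fun x =>
    comp_mem_Ioo_of_gt_inv hm1 hm2 hmap2 (fun x hx => (hg1 x hx).2) (hy ▸ hfp) hlt
  have hFc : ContinuousOn (fun x => f1 (f2 x)) (Ioo 0 xstar) :=
    (hc1.comp hc2 hmap2).mono (Ioo_subset_Ioi_self.trans Ioi_subset_Ici_self)
  have hu : ∀ n, a1 (n + 1 + 1) = f1 (f2 (a1 (n + 1))) := fun n => by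
    rw [ha1 _ n.succ_pos, ha2 _ n.succ_pos]
  have hmem1 : ∀ n, 1 ≤ n → a1 n ∈ Ioo 0 xstar :=
    forall_one_le_of_forall_succ (mem_Ioo_of_succ_eq hF hu ha11)
  have hmono1 : ∀ n, 1 ≤ n → a1 n < a1 (n + 1) :=
    forall_one_le_of_forall_succ fun n =>
      strictMono_of_succ_eq (u := fun n => a1 (n + 1)) hF hu ha11 n.lt_succ_self
  have hlim1 : Tendsto a1 atTop (𝓝 xstar) :=
    (tendsto_add_atTop_iff_nat 1).mp (tendsto_of_succ_eq hF hFc hu ha11)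
  have hmem2 : ∀ n, 1 ≤ n → a2 n ∈ Ioo 0 ystar := fun n hn => by
    obtain ⟨h0, hs⟩ := hmem1 n hn
    rw [ha2 n hn, hy, ← h20]
    exact ⟨hm2 self_mem_Ici h0.le h0, hm2 h0.le hx.le hs⟩
  have hmono2 : ∀ n, 1 ≤ n → a2 n < a2 (n + 1) := fun n hn => by
    rw [ha2 n hn, ha2 (n + 1) (by omega)]
    exact hm2 (hmem1 n hn).1.le (hmem1 (n + 1) (by omega)).1.le (hmono1 n hn)
  have hlim2 : Tendsto (fun n => f2 (a1 n)) atTop (𝓝 ystar) := hy ▸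
    (hc2 xstar hx.le).tendsto.comp (tendsto_nhdsWithin_of_tendsto_nhds_of_eventually_within _
      hlim1 (eventually_atTop.2 ⟨1, fun n hn => (hmem1 n hn).1.le⟩))
  exact ⟨hmono1, hmem1, hmono2, hmem2, hlim1,
    hlim2.congr' (eventually_atTop.2 ⟨1, fun n hn => (ha2 n hn).symm⟩)⟩

/-- the monotone iteration `a_{2,n} = f_2(a_{1,n})`,
`a_{1,n+1} = f_1(a_{2,n})`, started at `a_{1,1} ∈ (0, x*)`, is strictly
increasing, stays in `(0, x*) × (0, y*)`, and converges to `(x*, y*)`. -/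
theorem stmt7 (f1 f2 g1 : ℝ → ℝ)
    (hc1 : ContinuousOn f1 (Ici 0)) (hc2 : ContinuousOn f2 (Ici 0))
    (hm1 : StrictMonoOn f1 (Ici 0)) (hm2 : StrictMonoOn f2 (Ici 0))
    (h10 : f1 0 = 0) (h20 : f2 0 = 0)
    (hmap1 : MapsTo f1 (Ici 0) (Ici 0)) (hmap2 : MapsTo f2 (Ici 0) (Ici 0))
    (hg1 : ∀ x ∈ Ici (0:ℝ), g1 (f1 x) = x ∧ 0 ≤ g1 x ∧ f1 (g1 x) = x)
    (xstar ystar : ℝ) (hx : 0 < xstar)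
    (hy : ystar = f2 xstar) (hfp : f1 ystar = xstar)
    (hlt : ∀ x ∈ Ioo 0 xstar, f2 x > g1 x)
    (hgt : ∀ x ∈ Ioi xstar, f2 x < g1 x)
    (a1 a2 : ℕ → ℝ) (ha11 : a1 1 ∈ Ioo 0 xstar)
    (ha2 : ∀ n, 1 ≤ n → a2 n = f2 (a1 n))
    (ha1 : ∀ n, 1 ≤ n → a1 (n + 1) = f1 (a2 n)) :
    (∀ n, 1 ≤ n → a1 n < a1 (n + 1)) ∧ (∀ n, 1 ≤ n → a1 n ∈ Ioo 0 xstar) ∧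
    (∀ n, 1 ≤ n → a2 n < a2 (n + 1)) ∧ (∀ n, 1 ≤ n → a2 n ∈ Ioo 0 ystar) ∧
    Tendsto a1 atTop (nhds xstar) ∧ Tendsto a2 atTop (nhds ystar) :=
  stmt7_general f1 f2 g1 hc1 hc2 hm1 hm2 h20 hmap2 hg1 xstar ystar hx hy hfp hlt a1 a2 ha11 ha2 ha1
end

section
/- Let f_1, f_2 : [0,∞) → [0,∞) be continuous, strictly increasing, f_1(0) = f_2(0) = 0, with f_2(x) > f_1^{-1}(x) on (0, x*) and f_2(x) < f_1^{-1}(x) on (x*, ∞), y* = f_1(x*). Define b_{1,1} ∈ (x*, ∞) arbitrary, b_{2,n} = f_2(b_{1,n}), b_{1,n+1} = f_1(b_{2,n}). Then (b_{1,n}) is strictly decreasing with b_{1,n} ∈ (x*, ∞), (b_{2,n}) is strictly decreasing with b_{2,n} ∈ (y*, ∞), and b_{1,n} → x*, b_{2,n} → y*. -/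
/-!
For `x > x*` the hypothesis `f₂ x < f₁⁻¹ x` gives `f₁ (f₂ x) < x`, while monotonicity gives
`f₁ (f₂ x) > f₁ (f₂ x*) = x*`. So `b_{1,n}` is a strictly decreasing orbit of the continuous map
`f₁ ∘ f₂` bounded below by `x*`; its limit is a fixed point of `f₁ ∘ f₂` in `[x*, ∞)`, and the only
one is `x*`. Applying the continuous, increasing `f₂` transfers everything to `b_{2,n}`.
-/

open Set Filter Topology

section DecreasingOrbit

variable {T : ℝ → ℝ} {a : ℝ} {u : ℕ → ℝ}

theorem lt_of_orbit_of_lt_self (hTa : ∀ x, a < x → a < T x ∧ T x < x) (hu0 : a < u 0)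
    (hu : ∀ n, u (n + 1) = T (u n)) (n : ℕ) : a < u n := by
  induction n with
  | zero => exact hu0
  | succ n ih => rw [hu]; exact (hTa _ ih).1

theorem strictAnti_of_orbit_of_lt_self (hTa : ∀ x, a < x → a < T x ∧ T x < x) (hu0 : a < u 0)
    (hu : ∀ n, u (n + 1) = T (u n)) : StrictAnti u :=
  strictAnti_nat_of_succ_lt fun n => by
    rw [hu]; exact (hTa _ (lt_of_orbit_of_lt_self hTa hu0 hu n)).2

theorem tendsto_of_orbit_of_lt_self (hT : ContinuousOn T (Ici a))
    (hTa : ∀ x, a < x → a < T x ∧ T x < x) (hu0 : a < u 0) (hu : ∀ n, u (n + 1) = T (u n)) :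
    Tendsto u atTop (𝓝 a) := by
  have hbound : ∀ n, a < u n := lt_of_orbit_of_lt_self hTa hu0 hu
  have hanti : Antitone u := (strictAnti_of_orbit_of_lt_self hTa hu0 hu).antitone
  have hbdd : BddBelow (range u) := ⟨a, forall_mem_range.2 fun n => (hbound n).le⟩
  set L := ⨅ n, u n
  have hlim : Tendsto u atTop (𝓝 L) := tendsto_atTop_ciInf hanti hbdd
  have haL : a ≤ L := le_ciInf fun n => (hbound n).le
  have hlim_within : Tendsto u atTop (𝓝[Ici a] L) :=
    tendsto_nhdsWithin_iff.2 ⟨hlim, Eventually.of_forall fun n => (hbound n).le⟩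
  have hfix : T L = L := tendsto_nhds_unique
    (((hT L haL).tendsto.comp hlim_within).congr fun n => (hu n).symm)
    ((tendsto_add_atTop_iff_nat 1).2 hlim)
  obtain rfl | haL := haL.eq_or_lt
  · exact hlim
  · exact absurd hfix (hTa L haL).2.ne

end DecreasingOrbit

section TwoMapIteration

variable {f1 f2 g1 : ℝ → ℝ} {xstar ystar : ℝ}

theorem comp_lt_self_of_lt_inverse (hm1 : StrictMonoOn f1 (Ici 0))
    (hmap2 : MapsTo f2 (Ici 0) (Ici 0))
    (hg1 : ∀ x ∈ Ici (0:ℝ), g1 (f1 x) = x ∧ 0 ≤ g1 x ∧ f1 (g1 x) = x)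
    {x : ℝ} (hx : 0 ≤ x) (hlt : f2 x < g1 x) : f1 (f2 x) < x := by
  obtain ⟨-, hg1_nonneg, hfg1⟩ := hg1 x hx
  simpa only [hfg1] using hm1 (hmap2 hx) hg1_nonneg hlt

theorem lt_comp_of_lt (hm1 : StrictMonoOn f1 (Ici 0)) (hm2 : StrictMonoOn f2 (Ici 0))
    (hmap2 : MapsTo f2 (Ici 0) (Ici 0)) (hx : 0 ≤ xstar) (hy : ystar = f2 xstar)
    (hfp : f1 ystar = xstar) {x : ℝ} (hxx : xstar < x) :
    ystar < f2 x ∧ xstar < f1 (f2 x) := by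
  have hx0 : 0 ≤ x := hx.trans hxx.le
  have hyx : ystar < f2 x := hy ▸ hm2 hx hx0 hxx
  refine ⟨hyx, hfp ▸ hm1 ?_ (hmap2 hx0) hyx⟩
  exact hy ▸ hmap2 hx

end TwoMapIteration

theorem stmt8_general (f1 f2 g1 : ℝ → ℝ)
    (hc1 : ContinuousOn f1 (Ici 0)) (hc2 : ContinuousOn f2 (Ici 0))
    (hm1 : StrictMonoOn f1 (Ici 0)) (hm2 : StrictMonoOn f2 (Ici 0))
    (hmap2 : MapsTo f2 (Ici 0) (Ici 0))
    (hg1 : ∀ x ∈ Ici (0:ℝ), g1 (f1 x) = x ∧ 0 ≤ g1 x ∧ f1 (g1 x) = x)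
    (xstar ystar : ℝ) (hx : 0 < xstar)
    (hy : ystar = f2 xstar) (hfp : f1 ystar = xstar)
    (hgt : ∀ x ∈ Ioi xstar, f2 x < g1 x)
    (b1 b2 : ℕ → ℝ) (hb11 : b1 1 ∈ Ioi xstar)
    (hb2 : ∀ n, 1 ≤ n → b2 n = f2 (b1 n))
    (hb1 : ∀ n, 1 ≤ n → b1 (n + 1) = f1 (b2 n)) :
    (∀ n, 1 ≤ n → b1 (n + 1) < b1 n) ∧ (∀ n, 1 ≤ n → b1 n ∈ Ioi xstar) ∧
    (∀ n, 1 ≤ n → b2 (n + 1) < b2 n) ∧ (∀ n, 1 ≤ n → b2 n ∈ Ioi ystar) ∧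
    Tendsto b1 atTop (nhds xstar) ∧ Tendsto b2 atTop (nhds ystar) := by
  have hTa : ∀ x, xstar < x → xstar < f1 (f2 x) ∧ f1 (f2 x) < x := fun x hxx =>
    ⟨(lt_comp_of_lt hm1 hm2 hmap2 hx.le hy hfp hxx).2,
      comp_lt_self_of_lt_inverse hm1 hmap2 hg1 (hx.le.trans hxx.le) (hgt x hxx)⟩
  have hT : ContinuousOn (fun x => f1 (f2 x)) (Ici xstar) :=
    hc1.comp (hc2.mono (Ici_subset_Ici.2 hx.le)) fun x hxx => hmap2 (hx.le.trans hxx)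
  set u : ℕ → ℝ := fun n => b1 (n + 1)
  have hu : ∀ n, u (n + 1) = f1 (f2 (u n)) := fun n => by
    simp only [u, hb1 (n + 1) (by omega), hb2 (n + 1) (by omega)]
  have shift : ∀ {P : ℕ → Prop}, (∀ n, P (n + 1)) → ∀ n, 1 ≤ n → P n := fun h n hn => by
    obtain ⟨m, rfl⟩ := Nat.exists_eq_add_one.2 hn; exact h m
  have hb1_gt : ∀ n, 1 ≤ n → xstar < b1 n := shift (lt_of_orbit_of_lt_self hTa hb11 hu)
  have hb1_anti : StrictAnti u := strictAnti_of_orbit_of_lt_self hTa hb11 hu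
  have hb1_lim : Tendsto b1 atTop (𝓝 xstar) :=
    (tendsto_add_atTop_iff_nat 1).1 (tendsto_of_orbit_of_lt_self hT hTa hb11 hu)
  have hb2_eq : ∀ n, f2 (u n) = b2 (n + 1) := fun n => (hb2 (n + 1) (by omega)).symm
  refine ⟨shift fun n => hb1_anti n.lt_succ_self, hb1_gt, shift fun n => ?_,
    fun n hn => hb2 n hn ▸ (lt_comp_of_lt hm1 hm2 hmap2 hx.le hy hfp (hb1_gt n hn)).1,
    hb1_lim, ?_⟩
  · rw [← hb2_eq, ← hb2_eq]
    exact hm2 (hx.le.trans (hb1_gt _ (by omega)).le) (hx.le.trans (hb1_gt _ (by omega)).le)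
      (hb1_anti n.lt_succ_self)
  · refine (hy ▸ (hc2.continuousAt (Ici_mem_nhds hx)).tendsto.comp hb1_lim).congr' ?_
    filter_upwards [eventually_ge_atTop 1] with n hn
    exact (hb2 n hn).symm

/-- the monotone iteration `b_{2,n} = f_2(b_{1,n})`,
`b_{1,n+1} = f_1(b_{2,n})`, started at `b_{1,1} ∈ (x*, ∞)`, is strictly
decreasing, stays in `(x*, ∞) × (y*, ∞)`, and converges to `(x*, y*)`. -/
theorem stmt8 (f1 f2 g1 : ℝ → ℝ)
    (hc1 : ContinuousOn f1 (Ici 0)) (hc2 : ContinuousOn f2 (Ici 0))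
    (hm1 : StrictMonoOn f1 (Ici 0)) (hm2 : StrictMonoOn f2 (Ici 0))
    (h10 : f1 0 = 0) (h20 : f2 0 = 0)
    (hmap1 : MapsTo f1 (Ici 0) (Ici 0)) (hmap2 : MapsTo f2 (Ici 0) (Ici 0))
    (hg1 : ∀ x ∈ Ici (0:ℝ), g1 (f1 x) = x ∧ 0 ≤ g1 x ∧ f1 (g1 x) = x)
    (xstar ystar : ℝ) (hx : 0 < xstar)
    (hy : ystar = f2 xstar) (hfp : f1 ystar = xstar)
    (hlt : ∀ x ∈ Ioo 0 xstar, f2 x > g1 x)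
    (hgt : ∀ x ∈ Ioi xstar, f2 x < g1 x)
    (b1 b2 : ℕ → ℝ) (hb11 : b1 1 ∈ Ioi xstar)
    (hb2 : ∀ n, 1 ≤ n → b2 n = f2 (b1 n))
    (hb1 : ∀ n, 1 ≤ n → b1 (n + 1) = f1 (b2 n)) :
    (∀ n, 1 ≤ n → b1 (n + 1) < b1 n) ∧ (∀ n, 1 ≤ n → b1 n ∈ Ioi xstar) ∧
    (∀ n, 1 ≤ n → b2 (n + 1) < b2 n) ∧ (∀ n, 1 ≤ n → b2 n ∈ Ioi ystar) ∧
    Tendsto b1 atTop (nhds xstar) ∧ Tendsto b2 atTop (nhds ystar) :=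
  stmt8_general f1 f2 g1 hc1 hc2 hm1 hm2 hmap2 hg1 xstar ystar hx hy hfp hgt b1 b2 hb11 hb2 hb1
end

section
/- Let β ∈ (1, e²) and define α(β) = max{1 − ln β, β e^{-2}} if β ≤ e, and α(β) = β e^{-2} if β > e. Then for all x ≥ x⁰, where x⁰ = ln β if β < e and x⁰ = (β²/e)e^{-β/e} if β ≥ e, one has β|1 − x|e^{-x} ≤ α(β), and moreover α(β) < 1. -/
/-!
For `x ≥ 1` the elementary bound `x - 1 ≤ e^{x-2}` gives `β|1 - x|e^{-x} ≤ βe^{-2}`. For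
`ln β ≤ x ≤ 1` one has `βe^{-x} ≤ 1`, so `β(1 - x)e^{-x} ≤ 1 - x ≤ 1 - ln β`. When `β ≥ e` the
lower bound `x⁰` is already `≥ 1`: with `u = β/e ∈ [1, e]` this reads `e^{u-1} ≤ u²`, which follows
from `e^t ≤ 1 + 2t` on `[0, 1]` (convexity of `exp` and `e < 3`). Finally `α < 1` because
`ln β > 0` and `β < e²`.
-/

open Real

lemma sub_one_mul_exp_neg_le (x : ℝ) : (x - 1) * exp (-x) ≤ exp (-2) :=
  calc (x - 1) * exp (-x) ≤ exp (x - 2) * exp (-x) := by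
        gcongr
        linarith [add_one_le_exp (x - 2)]
    _ = exp (-2) := by rw [← exp_add]; ring_nf

lemma mul_abs_one_sub_mul_exp_neg_le_of_one_le {β x : ℝ} (hβ : 0 ≤ β) (hx : 1 ≤ x) :
    β * |1 - x| * exp (-x) ≤ β * exp (-2) := by
  rw [abs_of_nonpos (by linarith), mul_assoc, neg_sub]
  gcongr
  exact sub_one_mul_exp_neg_le x

lemma mul_one_sub_mul_exp_neg_le_one_sub_log {β x : ℝ} (hβ : 0 < β) (hx1 : x ≤ 1)
    (hx : log β ≤ x) : β * (1 - x) * exp (-x) ≤ 1 - log β := by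
  have hβx : β * exp (-x) ≤ 1 := by
    rw [← exp_log hβ, ← exp_add, exp_le_one_iff]
    linarith
  calc β * (1 - x) * exp (-x) = (1 - x) * (β * exp (-x)) := by ring
    _ ≤ 1 - x := mul_le_of_le_one_right (by linarith) hβx
    _ ≤ 1 - log β := by linarith

lemma exp_le_one_add_two_mul {t : ℝ} (h0 : 0 ≤ t) (h1 : t ≤ 1) : exp t ≤ 1 + 2 * t := by
  have hconv := convexOn_exp.2 (Set.mem_univ 0) (Set.mem_univ 1) (sub_nonneg.2 h1) h0 (by ring)
  simp only [smul_eq_mul, mul_zero, mul_one, zero_add, exp_zero] at hconv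
  nlinarith [exp_one_lt_three]

lemma exp_sub_one_le_sq {u : ℝ} (h1 : 1 ≤ u) (h3 : u ≤ 3) : exp (u - 1) ≤ u ^ 2 := by
  have hhalf := exp_le_one_add_two_mul (t := (u - 1) / 2) (by linarith) (by linarith)
  calc exp (u - 1) = exp ((u - 1) / 2) ^ 2 := by rw [← exp_nat_mul]; ring_nf
    _ ≤ (1 + 2 * ((u - 1) / 2)) ^ 2 := by gcongr
    _ = u ^ 2 := by ring

lemma one_le_sq_div_exp_one_mul_exp_neg {β : ℝ} (h1 : exp 1 ≤ β) (h3 : β ≤ 3 * exp 1) :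
    1 ≤ β ^ 2 / exp 1 * exp (-(β / exp 1)) := by
  set u := β / exp 1 with hu
  have he : 0 < exp 1 := exp_pos 1
  have hu1 : 1 ≤ u := (one_le_div he).2 h1
  have hu3 : u ≤ 3 := (div_le_iff₀ he).2 h3
  calc (1 : ℝ) = exp 1 * (exp (u - 1) * exp (-u)) := by rw [← exp_add, ← exp_add]; ring_nf; exact exp_zero.symm
    _ ≤ exp 1 * (u ^ 2 * exp (-u)) := by gcongr; exact exp_sub_one_le_sq hu1 hu3
    _ = β ^ 2 / exp 1 * exp (-u) := by rw [hu]; field_simp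

/-- for `β ∈ (1, e²)`, with
`α(β) = max{1 − ln β, β e^{−2}}` if `β ≤ e` and `α(β) = β e^{−2}` otherwise,
and `x⁰ = ln β` if `β < e`, `x⁰ = (β²/e)e^{−β/e}` if `β ≥ e`, one has
`β|1 − x|e^{−x} ≤ α(β)` for all `x ≥ x⁰`, and `α(β) < 1`. -/
theorem stmt15 (β : ℝ) (hβ : 1 < β ∧ β < Real.exp 1 ^ 2)
    (α x0 : ℝ)
    (hα : α = if β ≤ Real.exp 1 then
        max (1 - Real.log β) (β * Real.exp (-2)) else β * Real.exp (-2))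
    (hx0 : x0 = if β < Real.exp 1 then Real.log β
        else (β ^ 2 / Real.exp 1) * Real.exp (-(β / Real.exp 1))) :
    (∀ x : ℝ, x0 ≤ x → β * |1 - x| * Real.exp (-x) ≤ α) ∧ α < 1 := by
  obtain ⟨hβ1, hβ2⟩ := hβ
  have hβe2 : β * exp (-2) < 1 :=
    calc β * exp (-2) < exp 1 ^ 2 * exp (-2) := by gcongr
      _ = 1 := by rw [← exp_nat_mul, ← exp_add]; norm_num
  have hαβ : β * exp (-2) ≤ α := by
    rw [hα]; split_ifs
    exacts [le_max_right _ _, le_rfl]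
  refine ⟨fun x hx ↦ ?_, ?_⟩
  · rcases le_or_gt 1 x with hx1 | hx1
    · exact (mul_abs_one_sub_mul_exp_neg_le_of_one_le (by linarith) hx1).trans hαβ
    by_cases hβe : β < exp 1
    · rw [if_pos hβe] at hx0
      rw [hα, if_pos hβe.le, abs_of_nonneg (by linarith)]
      exact (mul_one_sub_mul_exp_neg_le_one_sub_log (by linarith) hx1.le (hx0 ▸ hx)).trans
        (le_max_left _ _)
    · rw [if_neg hβe] at hx0
      have hβ3 : β ≤ 3 * exp 1 := by nlinarith [exp_one_lt_three, exp_pos 1]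
      linarith [one_le_sq_div_exp_one_mul_exp_neg (not_lt.1 hβe) hβ3]
  · rw [hα]; split_ifs
    exacts [max_lt (by linarith [log_pos hβ1]) hβe2, hβe2]
end
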